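/- arXiv:1407.2472 — 2 statements merged into one kernel-verified Lean document; each statement's English description precedes it below -/
import Mathlib

section
/- Let (Ω,Σ,μ) be a probability space, Σ_a and Σ_b atomic σ-subalgebras of Σ with conditional expectations E_a, E_b, B_0 an atom of Σ_b, 2 < p < ∞, and 0 < c < 1. Assume ‖E_aE_bg‖_{L_2(μ)} ≤ c‖g‖_{L_2(μ)} for every g ∈ L_2(μ) with ∫_Ω g dμ = 0, and μ(B_0) > max{ (2·4^{−p}/(1−2·4^{−p}))^{1/(p−1)} , (1−4^{−p})^{1/p} }. Then there exists 0 < c_p < 1, depending only on c and p, such that ‖E_aE_bf‖_{L_p(μ)} ≤ c_p‖f‖_{L_p(μ)} for every f ∈ L_p(μ) with ∫_Ω f dμ = 0. -/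
open MeasureTheory ENNReal

/-- An atomic σ-subalgebra of the ambient σ-algebra, encoded by the countable
measurable partition of `Ω` into atoms of positive finite measure generating it. -/
structure AtomicPartition {Ω : Type*} {m : MeasurableSpace Ω} (μ : Measure Ω) where
  ι : Type
  countable : Countable ι
  atom : ι → Set Ω
  measurableSet : ∀ i, MeasurableSet (atom i)
  disjoint : Pairwise (Function.onFun Disjoint atom)
  cover : ⋃ i, atom i = Set.univ
  pos : ∀ i, 0 < μ (atom i)
  lt_top : ∀ i, μ (atom i) < ∞

theorem ProbabilityTheory.evariance_eq_sq_eLpNorm {Ω : Type*} {m : MeasurableSpace Ω}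
    {μ : Measure Ω} (X : Ω → ℝ) :
    evariance X μ = eLpNorm (fun x => X x - ∫ y, X y ∂μ) 2 μ ^ 2 := by
  have := eLpNorm_nnreal_pow_eq_lintegral (f := fun x => X x - ∫ y, X y ∂μ) (μ := μ)
    (p := 2) two_ne_zero
  simp only [NNReal.coe_ofNat, ENNReal.coe_ofNat, ENNReal.rpow_two] at this
  simp only [evariance, this]

namespace AtomicPartition

variable {Ω : Type*} {m : MeasurableSpace Ω} {μ : Measure Ω}

/-- The σ-algebra generated by the atoms. -/
def sigma (P : AtomicPartition μ) : MeasurableSpace Ω :=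
  MeasurableSpace.generateFrom (Set.range P.atom)

/-- The conditional expectation onto the atomic σ-algebra:
`E f = ∑_A (μ(A)⁻¹ ∫_A f dμ) · 1_A`. -/
noncomputable def condExp (P : AtomicPartition μ) {E : Type*} [NormedAddCommGroup E]
    [NormedSpace ℝ E] (f : Ω → E) : Ω → E := fun x =>
  ∑' i, Set.indicator (P.atom i)
    (fun _ => (μ (P.atom i)).toReal⁻¹ • ∫ y in P.atom i, f y ∂μ) x

end AtomicPartition

/-- `|R_B|`: the number (in `ℝ≥0∞`) of atoms of `Pa` meeting the atom `Pb.atom j`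
in positive measure. -/
noncomputable def rCard {Ω : Type*} {m : MeasurableSpace Ω} (μ : Measure Ω)
    (Pa Pb : AtomicPartition μ) (j : Pb.ι) : ℝ≥0∞ :=
  ∑' _i : {i : Pa.ι // 0 < μ (Pa.atom i ∩ Pb.atom j)}, 1

/-- `∑_{B ∈ R_A} |R_B| · μ(A∩B)² / (μ(A)μ(B))` for the atom `A = Pa.atom i`
(terms with `μ(A∩B) = 0` vanish, so we may sum over all atoms of `Pb`). -/
noncomputable def atomSum {Ω : Type*} {m : MeasurableSpace Ω} (μ : Measure Ω)
    (Pa Pb : AtomicPartition μ) (i : Pa.ι) : ℝ≥0∞ :=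
  ∑' j : Pb.ι, rCard μ Pa Pb j * μ (Pa.atom i ∩ Pb.atom j) ^ 2 /
    (μ (Pa.atom i) * μ (Pb.atom j))

/-- `Σ_a ∩ Σ_b = {Ω, ∅}` modulo `μ`-null sets. -/
def TrivialIntersection {Ω : Type*} {m : MeasurableSpace Ω} (μ : Measure Ω)
    (ma mb : MeasurableSpace Ω) : Prop :=
  ∀ S T : Set Ω, MeasurableSet[ma] S → MeasurableSet[mb] T →
    μ (symmDiff S T) = 0 → μ S = 0 ∨ μ Sᶜ = 0

/-- `(Σ_a, Σ_b)` is an admissible covering of `(Ω, Σ, μ)` with distinguished atoms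
`A0, B0` (which are actual atoms when `μ` is finite, and `∅`, i.e. `none`, when
`μ(Ω) = ∞`). -/
structure IsAdmissibleCovering {Ω : Type*} {m : MeasurableSpace Ω} (μ : Measure Ω)
    (Pa Pb : AtomicPartition μ) (A0 : Option Pa.ι) (B0 : Option Pb.ι) : Prop where
  trivial_inter : TrivialIntersection μ Pa.sigma Pb.sigma
  infinite_case : μ Set.univ = ∞ → A0 = none ∧ B0 = none
  finite_case : μ Set.univ < ∞ → A0.isSome ∧ B0.isSome
  small : min (⨆ i ∈ {i : Pa.ι | some i ≠ A0}, atomSum μ Pa Pb i)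
      (⨆ j ∈ {j : Pb.ι | some j ≠ B0}, atomSum μ Pb Pa j) < 1

/-!
Write `u = E_b f` and `h = |u|^{p/2}`. Jensen's inequality on each atom of `Σ_a` gives
`|E_a u|^p ≤ (E_a h)^2`, so `‖E_a E_b f‖_p^p ≤ ‖E_a h‖_2^2`. Since `h` is `Σ_b`-measurable, the
`L₂` contraction applied to `h - ∫ h` gives `‖E_a h‖_2^2 ≤ c^2 ‖h‖_2^2 + (1 - c^2) (∫ h)^2`, and
`‖h‖_2^2 = ‖u‖_p^p ≤ ‖f‖_p^p`. The mean `∫ h` is small because `B₀` is large: on `B₀ᶜ`,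
Cauchy–Schwarz gives `∫_{B₀ᶜ} h ≤ μ(B₀ᶜ)^{1/2} ‖f‖_p^{p/2}`, and on the atom `B₀` the function `u`
is the constant `μ(B₀)⁻¹ ∫_{B₀} f = -μ(B₀)⁻¹ ∫_{B₀ᶜ} f`, which Hölder bounds by the same quantity
once `μ(B₀ᶜ) ≤ μ(B₀)`. As `μ(B₀ᶜ) < 1/16`, this yields `(∫ h)^2 ≤ ‖f‖_p^p / 4`, hence
`c_p = (c^2 + (1 - c^2) / 4)^{1/p}`.
-/

theorem setLIntegral_le_setLIntegral_rpow_mul_measure {Ω : Type*} {m : MeasurableSpace Ω}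
    {μ : Measure Ω} {s : Set Ω} {φ : Ω → ℝ≥0∞} (hφ : AEMeasurable φ (μ.restrict s)) {r : ℝ}
    (hr : 1 ≤ r) :
    ∫⁻ x in s, φ x ∂μ ≤ (∫⁻ x in s, φ x ^ r ∂μ) ^ (1 / r) * μ s ^ (1 - 1 / r) := by
  simpa [eLpNorm'_eq_lintegral_enorm, Measure.restrict_apply_univ] using
    eLpNorm'_le_eLpNorm'_mul_rpow_measure_univ one_pos hr hφ.aestronglyMeasurable

theorem ENNReal.mul_rpow_half_le_of_mul_le {m a δ N : ℝ≥0∞} {p : ℝ} (hp : 2 ≤ p) (hm0 : m ≠ 0)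
    (hmtop : m ≠ ∞) (hδm : δ ≤ m) (h : m * a ≤ N ^ (1 / p) * δ ^ (1 - 1 / p)) :
    m * a ^ (p / 2) ≤ δ ^ (1 / 2 : ℝ) * N ^ (1 / 2 : ℝ) := by
  have hp0 : 0 < p := by linarith
  rw [← ENNReal.rpow_le_rpow_iff (zero_lt_two : (0 : ℝ) < 2), ENNReal.mul_rpow_of_nonneg _ _
    zero_le_two, ENNReal.mul_rpow_of_nonneg _ _ zero_le_two, ← ENNReal.rpow_mul,
    ← ENNReal.rpow_mul, ← ENNReal.rpow_mul, div_mul_cancel₀ p two_ne_zero,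
    one_div_mul_cancel two_ne_zero, ENNReal.rpow_one, ENNReal.rpow_one]
  have hpow : m ^ p * a ^ p ≤ N * δ ^ (p - 1) := by
    have := ENNReal.rpow_le_rpow h hp0.le
    rwa [ENNReal.mul_rpow_of_nonneg _ _ hp0.le, ENNReal.mul_rpow_of_nonneg _ _ hp0.le,
      ← ENNReal.rpow_mul, ← ENNReal.rpow_mul, one_div_mul_cancel hp0.ne', ENNReal.rpow_one,
      sub_mul, one_div_mul_cancel hp0.ne', one_mul] at this
  have hmp : m ^ (p - 2) ≠ 0 := by simp [hm0, hmtop]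
  have hmp' : m ^ (p - 2) ≠ ∞ := by simp [hm0, hmtop]
  rw [← ENNReal.mul_le_mul_iff_right hmp hmp']
  calc m ^ (p - 2) * (m ^ (2 : ℝ) * a ^ p) = m ^ p * a ^ p := by
        rw [← mul_assoc, ← ENNReal.rpow_add _ _ hm0 hmtop, sub_add_cancel]
    _ ≤ N * δ ^ (p - 1) := hpow
    _ = δ ^ (p - 2) * (δ * N) := by
        rw [show p - 1 = (p - 2) + 1 by ring,
          ENNReal.rpow_add_of_nonneg _ _ (by linarith) zero_le_one, ENNReal.rpow_one]
        ring
    _ ≤ m ^ (p - 2) * (δ * N) := by gcongr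

theorem fifteen_div_sixteen_le_one_sub_four_rpow_neg_rpow {p : ℝ} (hp : 2 ≤ p) :
    15 / 16 ≤ (1 - (4 : ℝ) ^ (-p)) ^ (1 / p) := by
  have h4 : (4 : ℝ) ^ (-p) ≤ 1 / 16 := by
    calc (4 : ℝ) ^ (-p) ≤ 4 ^ (-2 : ℝ) :=
          Real.rpow_le_rpow_of_exponent_le (by norm_num) (by linarith)
      _ = 1 / 16 := by norm_num [Real.rpow_neg, Real.rpow_two]
  have h4' : 0 < (4 : ℝ) ^ (-p) := by positivity
  calc (15 / 16 : ℝ) ≤ (1 - (4 : ℝ) ^ (-p)) ^ (1 : ℝ) := by rw [Real.rpow_one]; linarith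
    _ ≤ (1 - (4 : ℝ) ^ (-p)) ^ (1 / p) :=
        Real.rpow_le_rpow_of_exponent_ge (by linarith) (by linarith)
          (by rw [div_le_one] <;> linarith)

theorem eLpNorm_le_rpow_mul_of_lintegral_le {Ω E F : Type*} {m : MeasurableSpace Ω}
    {μ : Measure Ω} [NormedAddCommGroup E] [NormedAddCommGroup F] {f : Ω → E} {g : Ω → F}
    {p K : ℝ} (hp : 0 < p) (hK : 0 ≤ K)
    (h : ∫⁻ x, ‖g x‖ₑ ^ p ∂μ ≤ ENNReal.ofReal K * ∫⁻ x, ‖f x‖ₑ ^ p ∂μ) :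
    eLpNorm g (ENNReal.ofReal p) μ ≤
      ENNReal.ofReal (K ^ (1 / p)) * eLpNorm f (ENNReal.ofReal p) μ := by
  have hp0 : ENNReal.ofReal p ≠ 0 := (ENNReal.ofReal_pos.2 hp).ne'
  rw [eLpNorm_eq_lintegral_rpow_enorm_toReal hp0 ofReal_ne_top,
    eLpNorm_eq_lintegral_rpow_enorm_toReal hp0 ofReal_ne_top, ENNReal.toReal_ofReal hp.le,
    ← ENNReal.ofReal_rpow_of_nonneg hK (by positivity), ← ENNReal.mul_rpow_of_nonneg _ _
      (by positivity)]
  exact ENNReal.rpow_le_rpow h (by positivity)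

namespace AtomicPartition

variable {Ω : Type*} {m : MeasurableSpace Ω} {μ : Measure Ω} (P : AtomicPartition μ)
variable {E : Type*} [NormedAddCommGroup E] [NormedSpace ℝ E]

theorem exists_mem_atom (x : Ω) : ∃ i, x ∈ P.atom i :=
  Set.mem_iUnion.mp (P.cover ▸ Set.mem_univ x)

theorem eq_of_mem_atom {i j : P.ι} {x : Ω} (hi : x ∈ P.atom i) (hj : x ∈ P.atom j) : i = j := by
  by_contra hij
  exact Set.disjoint_left.mp (P.disjoint hij) hi hj

theorem condExp_apply (f : Ω → E) {i : P.ι} {x : Ω} (hx : x ∈ P.atom i) :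
    P.condExp f x = (μ (P.atom i)).toReal⁻¹ • ∫ y in P.atom i, f y ∂μ := by
  rw [condExp, tsum_eq_single i fun j hj => Set.indicator_of_notMem
    (fun hxj => hj (P.eq_of_mem_atom hxj hx)) _, Set.indicator_of_mem hx]

theorem toReal_measure_atom_pos (i : P.ι) : 0 < (μ (P.atom i)).toReal :=
  ENNReal.toReal_pos (P.pos i).ne' (P.lt_top i).ne

def IsConstOnAtoms {X : Type*} (g : Ω → X) : Prop :=
  ∀ i, ∀ x ∈ P.atom i, ∀ y ∈ P.atom i, g x = g y

variable {P}

theorem IsConstOnAtoms.comp {X Y : Type*} {g : Ω → X} (hg : P.IsConstOnAtoms g) (φ : X → Y) :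
    P.IsConstOnAtoms (φ ∘ g) :=
  fun i x hx y hy => congrArg φ (hg i x hx y hy)

theorem IsConstOnAtoms.measurable {X : Type*} [MeasurableSpace X] {g : Ω → X}
    (hg : P.IsConstOnAtoms g) : Measurable g := by
  intro s _
  have hpiece : ∀ i, MeasurableSet (P.atom i ∩ g ⁻¹' s) := fun i => by
    by_cases h : ∃ x ∈ P.atom i, g x ∈ s
    · obtain ⟨x, hx, hxs⟩ := h
      rw [Set.inter_eq_left.mpr fun y hy => Set.mem_preimage.mpr (hg i x hx y hy ▸ hxs)]
      exact P.measurableSet i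
    · rw [show P.atom i ∩ g ⁻¹' s = ∅ from
        Set.eq_empty_of_forall_notMem fun y hy => h ⟨y, hy.1, hy.2⟩]
      exact MeasurableSet.empty
  have := P.countable
  rw [← Set.univ_inter (g ⁻¹' s), ← P.cover, Set.iUnion_inter]
  exact MeasurableSet.iUnion hpiece

theorem isConstOnAtoms_condExp (f : Ω → E) : P.IsConstOnAtoms (P.condExp f) :=
  fun _ _ hx _ hy => by rw [P.condExp_apply f hx, P.condExp_apply f hy]

theorem IsConstOnAtoms.condExp_eq [CompleteSpace E] {g : Ω → E} (hg : P.IsConstOnAtoms g) :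
    P.condExp g = g := by
  funext x
  obtain ⟨i, hx⟩ := P.exists_mem_atom x
  rw [P.condExp_apply g hx, setIntegral_congr_fun (P.measurableSet i) fun y hy => hg i y hy x hx,
    setIntegral_const, measureReal_def,
    inv_smul_smul₀ (P.toReal_measure_atom_pos i).ne']

variable (P)

theorem lintegral_eq_tsum (φ : Ω → ℝ≥0∞) :
    ∫⁻ x, φ x ∂μ = ∑' i, ∫⁻ x in P.atom i, φ x ∂μ := by
  have := P.countable
  rw [← setLIntegral_univ, ← P.cover, lintegral_iUnion P.measurableSet P.disjoint]

theorem measure_mul_enorm_condExp (f : Ω → E) {i : P.ι} {x : Ω} (hx : x ∈ P.atom i) :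
    μ (P.atom i) * ‖P.condExp f x‖ₑ = ‖∫ y in P.atom i, f y ∂μ‖ₑ := by
  rw [P.condExp_apply f hx, enorm_smul, enorm_inv (P.toReal_measure_atom_pos i).ne',
    Real.enorm_of_nonneg ENNReal.toReal_nonneg, ENNReal.ofReal_toReal (P.lt_top i).ne, ← mul_assoc,
    ENNReal.mul_inv_cancel (P.pos i).ne' (P.lt_top i).ne, one_mul]

theorem enorm_condExp_rpow_le (f : Ω → E) {r : ℝ} (hr : 1 ≤ r) {i : P.ι} {x : Ω}
    (hx : x ∈ P.atom i) :
    ‖P.condExp f x‖ₑ ^ r ≤ (μ (P.atom i))⁻¹ * ∫⁻ y in P.atom i, ‖f y‖ₑ ^ r ∂μ := by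
  have hr0 : 0 < r := zero_lt_one.trans_le hr
  by_cases hf : IntegrableOn f (P.atom i) μ
  swap
  · rw [P.condExp_apply f hx, integral_undef hf, smul_zero, enorm_zero,
      ENNReal.zero_rpow_of_pos hr0]
    exact bot_le
  set a := μ (P.atom i)
  set J := ∫⁻ y in P.atom i, ‖f y‖ₑ ^ r ∂μ
  have ha0 : a ≠ 0 := (P.pos i).ne'
  have hatop : a ≠ ∞ := (P.lt_top i).ne
  have hHolder : a * ‖P.condExp f x‖ₑ ≤ J ^ (1 / r) * a ^ (1 - 1 / r) := by
    rw [P.measure_mul_enorm_condExp f hx]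
    exact (enorm_integral_le_lintegral_enorm _).trans
      (setLIntegral_le_setLIntegral_rpow_mul_measure hf.aestronglyMeasurable.enorm hr)
  calc ‖P.condExp f x‖ₑ ^ r = a⁻¹ ^ r * (a * ‖P.condExp f x‖ₑ) ^ r := by
        rw [ENNReal.mul_rpow_of_nonneg _ _ hr0.le, ← mul_assoc, ← ENNReal.mul_rpow_of_nonneg _ _
          hr0.le, ENNReal.inv_mul_cancel ha0 hatop, ENNReal.one_rpow, one_mul]
    _ ≤ a⁻¹ ^ r * (J ^ (1 / r) * a ^ (1 - 1 / r)) ^ r := by gcongr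
    _ = J * (a⁻¹ ^ r * a ^ ((1 - 1 / r) * r)) := by
        rw [ENNReal.mul_rpow_of_nonneg _ _ hr0.le, ← ENNReal.rpow_mul, ← ENNReal.rpow_mul,
          one_div_mul_cancel hr0.ne', ENNReal.rpow_one, mul_left_comm]
    _ = a⁻¹ * J := by
        rw [← ENNReal.rpow_neg_one a, ← ENNReal.rpow_mul, ← ENNReal.rpow_add _ _ ha0 hatop,
          mul_comm]
        congr 2
        field_simp
        ring

theorem lintegral_enorm_condExp_rpow_le (f : Ω → E) {r : ℝ} (hr : 1 ≤ r) :
    ∫⁻ x, ‖P.condExp f x‖ₑ ^ r ∂μ ≤ ∫⁻ x, ‖f x‖ₑ ^ r ∂μ := by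
  rw [P.lintegral_eq_tsum, P.lintegral_eq_tsum]
  refine ENNReal.tsum_le_tsum fun i => ?_
  calc ∫⁻ x in P.atom i, ‖P.condExp f x‖ₑ ^ r ∂μ
      ≤ ∫⁻ _ in P.atom i, (μ (P.atom i))⁻¹ * ∫⁻ y in P.atom i, ‖f y‖ₑ ^ r ∂μ ∂μ :=
        setLIntegral_mono' (P.measurableSet i) fun x hx => P.enorm_condExp_rpow_le f hr hx
    _ = ∫⁻ y in P.atom i, ‖f y‖ₑ ^ r ∂μ := by
        rw [setLIntegral_const, mul_comm, ← mul_assoc,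
          ENNReal.mul_inv_cancel (P.pos i).ne' (P.lt_top i).ne, one_mul]

theorem eLpNorm_condExp_le (f : Ω → E) {p : ℝ≥0∞} (hp1 : 1 ≤ p) (hp : p ≠ ∞) :
    eLpNorm (P.condExp f) p μ ≤ eLpNorm f p μ := by
  have hp0 : p ≠ 0 := (zero_lt_one.trans_le hp1).ne'
  rw [eLpNorm_eq_lintegral_rpow_enorm_toReal hp0 hp, eLpNorm_eq_lintegral_rpow_enorm_toReal hp0 hp]
  exact ENNReal.rpow_le_rpow
    (P.lintegral_enorm_condExp_rpow_le f (by simpa using ENNReal.toReal_mono hp hp1))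
    (by positivity)

theorem memLp_condExp [MeasurableSpace E] [BorelSpace E] [SecondCountableTopology E]
    {f : Ω → E} {p : ℝ≥0∞} (hp1 : 1 ≤ p) (hp : p ≠ ∞) (hf : MemLp f p μ) :
    MemLp (P.condExp f) p μ :=
  ⟨(P.isConstOnAtoms_condExp f).measurable.aestronglyMeasurable,
    (P.eLpNorm_condExp_le f hp1 hp).trans_lt hf.2⟩

theorem ofReal_condExp {g : Ω → ℝ} (hg : Integrable g μ) (hg0 : 0 ≤ g) {i : P.ι} {x : Ω}
    (hx : x ∈ P.atom i) :
    ENNReal.ofReal (P.condExp g x) =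
      (μ (P.atom i))⁻¹ * ∫⁻ y in P.atom i, ENNReal.ofReal (g y) ∂μ := by
  rw [P.condExp_apply g hx, smul_eq_mul, ENNReal.ofReal_mul (by positivity),
    ENNReal.ofReal_inv_of_pos (P.toReal_measure_atom_pos i), ENNReal.ofReal_toReal (P.lt_top i).ne,
    ofReal_integral_eq_lintegral_ofReal hg.integrableOn (ae_of_all _ hg0)]

theorem enorm_condExp_rpow_le_ofReal_condExp (f : Ω → E) {r : ℝ} (hr : 1 ≤ r)
    (hf : Integrable (fun y => ‖f y‖ ^ r) μ) (x : Ω) :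
    ‖P.condExp f x‖ₑ ^ r ≤ ENNReal.ofReal (P.condExp (fun y => ‖f y‖ ^ r) x) := by
  obtain ⟨i, hx⟩ := P.exists_mem_atom x
  rw [P.ofReal_condExp hf (fun y => by positivity) hx]
  convert P.enorm_condExp_rpow_le f hr hx using 4 with y
  rw [← ENNReal.ofReal_rpow_of_nonneg (norm_nonneg _) (zero_le_one.trans hr), ofReal_norm]

theorem condExp_sub_const [CompleteSpace E] {g : Ω → E} (hg : Integrable g μ) (k : E) :
    P.condExp (fun x => g x - k) = fun x => P.condExp g x - k := by
  funext x
  obtain ⟨i, hx⟩ := P.exists_mem_atom x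
  rw [P.condExp_apply _ hx, P.condExp_apply g hx,
    integral_sub hg.integrableOn (integrableOn_const (P.lt_top i).ne), setIntegral_const,
    measureReal_def, smul_sub, inv_smul_smul₀ (P.toReal_measure_atom_pos i).ne']

theorem integral_condExp [MeasurableSpace E] [BorelSpace E] [SecondCountableTopology E]
    [CompleteSpace E] {g : Ω → E} (hg : Integrable g μ) :
    ∫ x, P.condExp g x ∂μ = ∫ x, g x ∂μ := by
  have := P.countable
  have hEg : Integrable (P.condExp g) μ :=
    memLp_one_iff_integrable.mp
      (P.memLp_condExp le_rfl one_ne_top (memLp_one_iff_integrable.mpr hg))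
  rw [← setIntegral_univ, ← setIntegral_univ (f := g), ← P.cover,
    integral_iUnion P.measurableSet P.disjoint (P.cover ▸ hEg.integrableOn),
    integral_iUnion P.measurableSet P.disjoint (P.cover ▸ hg.integrableOn)]
  refine tsum_congr fun i => ?_
  rw [setIntegral_congr_fun (P.measurableSet i) fun x hx => P.condExp_apply g hx,
    setIntegral_const, measureReal_def, smul_inv_smul₀ (P.toReal_measure_atom_pos i).ne']

theorem condExp_ofReal (g : Ω → ℝ) :
    P.condExp (fun x => (g x : ℂ)) = fun x => ((P.condExp g x : ℝ) : ℂ) := by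
  funext x
  obtain ⟨i, hx⟩ := P.exists_mem_atom x
  rw [P.condExp_apply _ hx, P.condExp_apply g hx, integral_complex_ofReal, Complex.real_smul,
    smul_eq_mul, Complex.ofReal_mul]

theorem eLpNorm_condExp_condExp_ofReal (Pa Pb : AtomicPartition μ) (g : Ω → ℝ) (p : ℝ≥0∞) :
    eLpNorm (Pa.condExp (Pb.condExp fun x => (g x : ℂ))) p μ =
      eLpNorm (Pa.condExp (Pb.condExp g)) p μ := by
  rw [Pb.condExp_ofReal, Pa.condExp_ofReal]
  exact eLpNorm_congr_norm_ae (ae_of_all _ fun x => Complex.norm_real _)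

theorem sq_lintegral_enorm_condExp_rpow_half_le {j : P.ι} (hj : μ (P.atom j)ᶜ ≤ μ (P.atom j))
    {p : ℝ} (hp : 2 ≤ p) {f : Ω → E} (hf : Integrable f μ) (hf0 : ∫ x, f x ∂μ = 0) :
    (∫⁻ x, ‖P.condExp f x‖ₑ ^ (p / 2) ∂μ) ^ 2 ≤ 4 * μ (P.atom j)ᶜ * ∫⁻ x, ‖f x‖ₑ ^ p ∂μ := by
  set B := P.atom j
  set N := ∫⁻ x, ‖f x‖ₑ ^ p ∂μ
  have hp1 : 1 ≤ p := by linarith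
  have hB : MeasurableSet B := P.measurableSet j
  have hu : Measurable fun x => ‖P.condExp f x‖ₑ :=
    ((P.isConstOnAtoms_condExp f).comp _).measurable
  have hcompl : ∫⁻ x in Bᶜ, ‖P.condExp f x‖ₑ ^ (p / 2) ∂μ ≤
      μ Bᶜ ^ (1 / 2 : ℝ) * N ^ (1 / 2 : ℝ) := by
    have hsq : ∀ x, (‖P.condExp f x‖ₑ ^ (p / 2)) ^ (2 : ℝ) = ‖P.condExp f x‖ₑ ^ p := fun x => by
      rw [← ENNReal.rpow_mul, div_mul_cancel₀ p two_ne_zero]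
    calc ∫⁻ x in Bᶜ, ‖P.condExp f x‖ₑ ^ (p / 2) ∂μ
        ≤ (∫⁻ x in Bᶜ, ‖P.condExp f x‖ₑ ^ p ∂μ) ^ (1 / 2 : ℝ) * μ Bᶜ ^ (1 - 1 / 2 : ℝ) := by
          have := setLIntegral_le_setLIntegral_rpow_mul_measure (μ := μ) (s := Bᶜ)
            (hu.pow_const (p / 2)).aemeasurable (r := 2) one_le_two
          simpa only [hsq] using this
      _ ≤ N ^ (1 / 2 : ℝ) * μ Bᶜ ^ (1 / 2 : ℝ) := by
          norm_num only
          gcongr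
          exact setLIntegral_le_lintegral _ _ |>.trans (P.lintegral_enorm_condExp_rpow_le f hp1)
      _ = μ Bᶜ ^ (1 / 2 : ℝ) * N ^ (1 / 2 : ℝ) := mul_comm _ _
  have hatom : ∫⁻ x in B, ‖P.condExp f x‖ₑ ^ (p / 2) ∂μ ≤
      μ Bᶜ ^ (1 / 2 : ℝ) * N ^ (1 / 2 : ℝ) := by
    obtain ⟨x₀, hx₀⟩ := nonempty_of_measure_ne_zero (P.pos j).ne'
    have hconst : ∫⁻ x in B, ‖P.condExp f x‖ₑ ^ (p / 2) ∂μ =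
        μ B * ‖P.condExp f x₀‖ₑ ^ (p / 2) := by
      rw [setLIntegral_congr_fun hB fun x hx => by
        rw [P.isConstOnAtoms_condExp f j x hx x₀ hx₀], setLIntegral_const, mul_comm]
    have hmean : μ B * ‖P.condExp f x₀‖ₑ ≤ N ^ (1 / p) * μ Bᶜ ^ (1 - 1 / p) := by
      rw [P.measure_mul_enorm_condExp f hx₀,
        eq_neg_of_add_eq_zero_left ((integral_add_compl hB hf).trans hf0), enorm_neg]
      refine (enorm_integral_le_lintegral_enorm _).trans <|
        (setLIntegral_le_setLIntegral_rpow_mul_measure hf.aestronglyMeasurable.enorm.restrict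
          hp1).trans ?_
      gcongr
      exact setLIntegral_le_lintegral _ _
    rw [hconst]
    exact ENNReal.mul_rpow_half_le_of_mul_le hp (P.pos j).ne' (P.lt_top j).ne hj hmean
  have hsqrt : ∀ x : ℝ≥0∞, (x ^ (1 / 2 : ℝ)) ^ 2 = x := fun x => by
    rw [← ENNReal.rpow_natCast, ← ENNReal.rpow_mul]
    norm_num
  rw [← lintegral_add_compl _ hB]
  calc _ ≤ (2 * (μ Bᶜ ^ (1 / 2 : ℝ) * N ^ (1 / 2 : ℝ))) ^ 2 := by
        rw [two_mul]
        gcongr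
    _ = 4 * μ Bᶜ * N := by
        rw [mul_pow, mul_pow, hsqrt, hsqrt]
        norm_num
        ring

section Probability

open ProbabilityTheory

variable [IsProbabilityMeasure μ]

theorem variance_condExp_le (Pa Pb : AtomicPartition μ) {c : ℝ} (hc : 0 ≤ c)
    (hL2 : ∀ g : Ω → ℝ, MemLp g 2 μ → ∫ x, g x ∂μ = 0 →
      eLpNorm (Pa.condExp (Pb.condExp g)) 2 μ ≤ ENNReal.ofReal c * eLpNorm g 2 μ)
    {g : Ω → ℝ} (hg : MemLp g 2 μ) (hgb : Pb.IsConstOnAtoms g) :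
    variance (Pa.condExp g) μ ≤ c ^ 2 * variance g μ := by
  set a := ∫ x, g x ∂μ
  have hgi : Integrable g μ := hg.integrable one_le_two
  have hcentered : ∫ x, (g x - a) ∂μ = 0 := by
    simp [integral_sub hgi (integrable_const a), a]
  have hb : Pb.condExp (fun x => g x - a) = fun x => g x - a :=
    (hgb.comp (· - a)).condExp_eq
  have ha : Pa.condExp (fun x => g x - a) =
      fun x => Pa.condExp g x - ∫ y, Pa.condExp g y ∂μ := by
    rw [Pa.condExp_sub_const hgi, Pa.integral_condExp hgi]
  have h := hL2 (fun x => g x - a) (hg.sub (memLp_const a)) hcentered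
  rw [hb, ha] at h
  have hev : evariance (Pa.condExp g) μ ≤ ENNReal.ofReal (c ^ 2) * evariance g μ := by
    rw [evariance_eq_sq_eLpNorm, evariance_eq_sq_eLpNorm, ENNReal.ofReal_pow hc, ← mul_pow]
    gcongr
  have := ENNReal.toReal_mono (mul_ne_top ofReal_ne_top (evariance_ne_top hg)) hev
  rwa [ENNReal.toReal_mul, ENNReal.toReal_ofReal (sq_nonneg c)] at this

theorem integral_sq_condExp_le (Pa Pb : AtomicPartition μ) {c : ℝ} (hc : 0 ≤ c)
    (hL2 : ∀ g : Ω → ℝ, MemLp g 2 μ → ∫ x, g x ∂μ = 0 →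
      eLpNorm (Pa.condExp (Pb.condExp g)) 2 μ ≤ ENNReal.ofReal c * eLpNorm g 2 μ)
    {g : Ω → ℝ} (hg : MemLp g 2 μ) (hgb : Pb.IsConstOnAtoms g) :
    ∫ x, Pa.condExp g x ^ 2 ∂μ ≤ c ^ 2 * ∫ x, g x ^ 2 ∂μ + (1 - c ^ 2) * (∫ x, g x ∂μ) ^ 2 := by
  have hv := variance_condExp_le Pa Pb hc hL2 hg hgb
  rw [variance_eq_sub (Pa.memLp_condExp one_le_two ofNat_ne_top hg), variance_eq_sub hg,
    Pa.integral_condExp (hg.integrable one_le_two)] at hv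
  simp only [Pi.pow_apply] at hv
  linarith

theorem lintegral_enorm_condExp_condExp_rpow_le (Pa Pb : AtomicPartition μ) {j : Pb.ι}
    (hj : μ (Pb.atom j)ᶜ ≤ μ (Pb.atom j)) {p c : ℝ} (hp : 2 ≤ p) (hc0 : 0 ≤ c) (hc1 : c ≤ 1)
    (hL2 : ∀ g : Ω → ℝ, MemLp g 2 μ → ∫ x, g x ∂μ = 0 →
      eLpNorm (Pa.condExp (Pb.condExp g)) 2 μ ≤ ENNReal.ofReal c * eLpNorm g 2 μ)
    {f : Ω → E} (hf : MemLp f (ENNReal.ofReal p) μ) (hf0 : ∫ x, f x ∂μ = 0) :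
    ∫⁻ x, ‖Pa.condExp (Pb.condExp f) x‖ₑ ^ p ∂μ ≤
      ENNReal.ofReal (c ^ 2 + (1 - c ^ 2) * (4 * μ.real (Pb.atom j)ᶜ)) *
        ∫⁻ x, ‖f x‖ₑ ^ p ∂μ := by
  set u := Pb.condExp f
  set N := ∫⁻ x, ‖f x‖ₑ ^ p ∂μ
  have hp0 : 0 < p := by linarith
  have hN : N ≠ ∞ := by
    have := lintegral_rpow_enorm_lt_top_of_eLpNorm_lt_top (ENNReal.ofReal_pos.2 hp0).ne'
      ofReal_ne_top hf.2
    rw [ENNReal.toReal_ofReal hp0.le] at this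
    exact this.ne
  set h : Ω → ℝ := fun x => ‖u x‖ ^ (p / 2)
  have hofReal : ∀ x, ENNReal.ofReal (h x) = ‖u x‖ₑ ^ (p / 2) := fun x => by
    rw [← ENNReal.ofReal_rpow_of_nonneg (norm_nonneg _) (by positivity), ofReal_norm]
  have hofReal_sq : ∀ x, ENNReal.ofReal (h x ^ 2) = ‖u x‖ₑ ^ p := fun x => by
    rw [ENNReal.ofReal_pow (by positivity), hofReal, ← ENNReal.rpow_natCast, ← ENNReal.rpow_mul]
    norm_num
  have hhb : Pb.IsConstOnAtoms h := (Pb.isConstOnAtoms_condExp f).comp (‖·‖ ^ (p / 2))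
  have hsq_le : ∫⁻ x, ENNReal.ofReal (h x ^ 2) ∂μ ≤ N := by
    simpa only [hofReal_sq] using Pb.lintegral_enorm_condExp_rpow_le f (by linarith)
  have hhL2 : MemLp h 2 μ := (memLp_two_iff_integrable_sq hhb.measurable.aestronglyMeasurable).2
    ⟨(hhb.measurable.pow_const 2).aestronglyMeasurable,
      (hasFiniteIntegral_iff_ofReal (ae_of_all _ fun x => by positivity)).2
        (hsq_le.trans_lt hN.lt_top)⟩
  have hhint : Integrable h μ := hhL2.integrable one_le_two
  have hHL2 := Pa.memLp_condExp one_le_two ofNat_ne_top hhL2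
  have hJensen : ∀ x, ‖Pa.condExp u x‖ₑ ^ p ≤ ENNReal.ofReal (Pa.condExp h x ^ 2) := fun x => by
    have := Pa.enorm_condExp_rpow_le_ofReal_condExp u (by linarith) hhint x
    calc ‖Pa.condExp u x‖ₑ ^ p = (‖Pa.condExp u x‖ₑ ^ (p / 2)) ^ 2 := by
          rw [← ENNReal.rpow_natCast, ← ENNReal.rpow_mul]
          norm_num
      _ ≤ ENNReal.ofReal |Pa.condExp h x| ^ 2 :=
          pow_le_pow_left₀ bot_le (this.trans (ENNReal.ofReal_le_ofReal (le_abs_self _))) 2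
      _ = ENNReal.ofReal (Pa.condExp h x ^ 2) := by
          rw [← ENNReal.ofReal_pow (abs_nonneg _), sq_abs]
  have hsq : ∫ x, h x ^ 2 ∂μ ≤ N.toReal := by
    rw [← ENNReal.ofReal_le_iff_le_toReal hN, ofReal_integral_eq_lintegral_ofReal
      hhL2.integrable_sq (ae_of_all _ fun x => by positivity)]
    exact hsq_le
  have hmean : (∫ x, h x ∂μ) ^ 2 ≤ 4 * μ.real (Pb.atom j)ᶜ * N.toReal := by
    have := Pb.sq_lintegral_enorm_condExp_rpow_half_le hj hp
      (hf.integrable (ENNReal.one_le_ofReal.2 (by linarith))) hf0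
    rw [← lintegral_congr hofReal, ← ofReal_integral_eq_lintegral_ofReal hhint
      (ae_of_all _ fun x => by positivity), ← ENNReal.ofReal_pow (integral_nonneg fun x => by
        positivity), ENNReal.ofReal_le_iff_le_toReal (by finiteness)] at this
    simpa [ENNReal.toReal_mul, measureReal_def] using this
  have hL2bound := Pa.integral_sq_condExp_le Pb hc0 hL2 hhL2 hhb
  have hc2 : 0 ≤ 1 - c ^ 2 := by nlinarith
  calc ∫⁻ x, ‖Pa.condExp u x‖ₑ ^ p ∂μ
      ≤ ∫⁻ x, ENNReal.ofReal (Pa.condExp h x ^ 2) ∂μ := lintegral_mono hJensen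
    _ = ENNReal.ofReal (∫ x, Pa.condExp h x ^ 2 ∂μ) :=
        (ofReal_integral_eq_lintegral_ofReal hHL2.integrable_sq
          (ae_of_all _ fun x => by positivity)).symm
    _ ≤ ENNReal.ofReal ((c ^ 2 + (1 - c ^ 2) * (4 * μ.real (Pb.atom j)ᶜ)) * N.toReal) := by
        refine ENNReal.ofReal_le_ofReal (hL2bound.trans ?_)
        nlinarith [mul_le_mul_of_nonneg_left hsq (sq_nonneg c),
          mul_le_mul_of_nonneg_left hmean hc2]
    _ = ENNReal.ofReal (c ^ 2 + (1 - c ^ 2) * (4 * μ.real (Pb.atom j)ᶜ)) * N := by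
        rw [ENNReal.ofReal_mul (by positivity), ENNReal.ofReal_toReal hN]

end Probability

end AtomicPartition

/-- the case `p > 2` on probability spaces.  If `E_a E_b` is a strict
`L₂`-contraction on mean-zero functions with constant `c < 1` and the distinguished atom
`B₀` satisfies `μ(B₀) > max{(2·4⁻ᵖ/(1-2·4⁻ᵖ))^{1/(p-1)}, (1-4⁻ᵖ)^{1/p}}`, then `E_a E_b`
is a strict `L_p`-contraction on mean-zero functions, with a constant depending only on
`c` and `p`. -/
theorem statement7 {Ω : Type*} [MeasurableSpace Ω] (μ : Measure Ω) [IsProbabilityMeasure μ]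
    (Pa Pb : AtomicPartition μ) (j0 : Pb.ι) (p c : ℝ)
    (hp : 2 < p) (hc0 : 0 < c) (hc1 : c < 1)
    (H2 : ∀ g : Ω → ℂ, MemLp g 2 μ → ∫ x, g x ∂μ = 0 →
      eLpNorm (Pa.condExp (Pb.condExp g)) 2 μ ≤ ENNReal.ofReal c * eLpNorm g 2 μ)
    (hB0 : ENNReal.ofReal (max
        ((2 * (4:ℝ) ^ (-p) / (1 - 2 * (4:ℝ) ^ (-p))) ^ (1 / (p - 1)))
        ((1 - (4:ℝ) ^ (-p)) ^ (1 / p))) < μ (Pb.atom j0)) :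
    ∃ cp : ℝ, 0 < cp ∧ cp < 1 ∧
      ∀ f : Ω → ℂ, MemLp f (ENNReal.ofReal p) μ → ∫ x, f x ∂μ = 0 →
        eLpNorm (Pa.condExp (Pb.condExp f)) (ENNReal.ofReal p) μ
          ≤ ENNReal.ofReal cp * eLpNorm f (ENNReal.ofReal p) μ := by
  have hB : 15 / 16 < μ.real (Pb.atom j0) := by
    have := (ENNReal.ofReal_le_ofReal ((fifteen_div_sixteen_le_one_sub_four_rpow_neg_rpow
      hp.le).trans (le_max_right _ _))).trans_lt hB0
    rwa [ENNReal.ofReal_lt_iff_lt_toReal (by norm_num) (measure_ne_top μ _)] at this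
  have hBc : μ.real (Pb.atom j0)ᶜ < 1 / 16 := by
    rw [probReal_compl_eq_one_sub (Pb.measurableSet j0)]
    linarith
  have hj : μ (Pb.atom j0)ᶜ ≤ μ (Pb.atom j0) := by
    rw [← ENNReal.toReal_le_toReal (measure_ne_top μ _) (measure_ne_top μ _)]
    change μ.real _ ≤ μ.real _
    linarith
  have hL2 : ∀ g : Ω → ℝ, MemLp g 2 μ → ∫ x, g x ∂μ = 0 →
      eLpNorm (Pa.condExp (Pb.condExp g)) 2 μ ≤ ENNReal.ofReal c * eLpNorm g 2 μ := by
    intro g hg hg0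
    have := H2 (fun x => (g x : ℂ)) (hg.ofReal (K := ℂ)) (by simp [integral_complex_ofReal, hg0])
    rwa [Pa.eLpNorm_condExp_condExp_ofReal, eLpNorm_congr_norm_ae (g := g)
      (ae_of_all _ fun x => Complex.norm_real _)] at this
  set K := c ^ 2 + (1 - c ^ 2) / 4 with hK
  have hK0 : 0 < K := by rw [hK]; nlinarith
  have hK1 : K < 1 := by rw [hK]; nlinarith
  refine ⟨K ^ (1 / p), by positivity, Real.rpow_lt_one hK0.le hK1 (by positivity),
    fun f hf hf0 => eLpNorm_le_rpow_mul_of_lintegral_le (by linarith) hK0.le ?_⟩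
  refine (Pa.lintegral_enorm_condExp_condExp_rpow_le Pb hj hp.le hc0.le hc1.le hL2 hf hf0).trans ?_
  gcongr
  rw [hK]
  nlinarith
end

section
/- Let (Ω,Σ,μ) be a measure space, T : L_2(μ) → L_2(μ) a bounded linear operator with operator norm ‖T‖, k : Ω×Ω → ℂ measurable, and Q ⊆ Q̂ measurable sets with 0 < μ(Q) and μ(Q̂) ≤ c_0·μ(Q) < ∞ for some c_0 ≥ 1. Assume: (kernel representation) for every f ∈ L_2(μ) ∩ L_∞(μ) vanishing μ-a.e. on Q̂, one has Tf(z) = ∫_Ω k(z,y)f(y) dμ(y) for μ-a.e. z ∈ Q; (atomic Hörmander condition) there is H ≥ 0 such that for all z_1, z_2 ∈ Q, ∫_{Ω∖Q̂} |k(z_1,x) − k(z_2,x)| dμ(x) ≤ H. Then for every f ∈ L_2(μ) ∩ L_∞(μ): inf_{c∈ℂ} (1/μ(Q)) ∫_Q |Tf − c|² dμ ≤ (‖T‖·√c_0 + H)²·‖f‖_{L_∞(μ)}². -/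
/-!
Fix `z₀ ∈ Q` and split `f = 1_{Q̂} f + 1_{Q̂ᶜ} f`. The near part only needs `L₂`-boundedness:
`‖T(1_{Q̂} f)‖_{L₂(Q)} ≤ ‖T‖ μ(Q̂)^{1/2} ‖f‖_∞ ≤ ‖T‖ √c₀ μ(Q)^{1/2} ‖f‖_∞`. On `Q` the far part
is given by the kernel, so with `c = ∫_{Q̂ᶜ} k(z₀, y) f(y) dμ(y)` the Hörmander condition gives
`|T(1_{Q̂ᶜ} f)(z) - c| ≤ H ‖f‖_∞` for a.e. `z ∈ Q`. Minkowski's inequality in `L₂(Q)` combines the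
two bounds.
-/

open MeasureTheory ENNReal

lemma ENNReal.ofReal_rpow_inv_two (x : ℝ) : ENNReal.ofReal x ^ (2⁻¹ : ℝ) = ENNReal.ofReal √x := by
  rcases le_total 0 x with hx | hx
  · rw [ofReal_rpow_of_nonneg hx (by norm_num), Real.sqrt_eq_rpow, one_div]
  · rw [ofReal_of_nonpos hx, Real.sqrt_eq_zero'.2 hx, ofReal_zero, zero_rpow_of_pos (by norm_num)]

lemma ENNReal.inv_mul_sq_le_sq_of_le_mul_rpow_inv_two {m S A : ℝ≥0∞} (hm₀ : m ≠ 0) (hm : m ≠ ∞)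
    (hS : S ≤ A * m ^ (2⁻¹ : ℝ)) : m⁻¹ * S ^ 2 ≤ A ^ 2 :=
  calc m⁻¹ * S ^ 2 ≤ m⁻¹ * (A * m ^ (2⁻¹ : ℝ)) ^ 2 := by gcongr
    _ = A ^ 2 * (m⁻¹ * (m ^ (2⁻¹ : ℝ)) ^ (2 : ℝ)) := by rw [rpow_two]; ring
    _ = A ^ 2 := by
      rw [← rpow_mul, inv_mul_cancel₀ two_ne_zero, rpow_one, ENNReal.inv_mul_cancel hm₀ hm,
        mul_one]

namespace MeasureTheory

variable {Ω : Type*} [MeasurableSpace Ω] {μ : Measure Ω}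

lemma lintegral_enorm_sq_eq_eLpNorm_sq {E : Type*} [NormedAddCommGroup E] (f : Ω → E) :
    ∫⁻ x, ‖f x‖ₑ ^ 2 ∂μ = eLpNorm f 2 μ ^ 2 := by
  simpa using (eLpNorm_nnreal_pow_eq_lintegral (f := f) (μ := μ) (p := 2) two_ne_zero).symm

lemma eLpNorm_apply_toLp_le {𝕜 E F : Type*} [NontriviallyNormedField 𝕜] [NormedAddCommGroup E]
    [NormedSpace 𝕜 E] [NormedAddCommGroup F] [NormedSpace 𝕜 F] {p : ℝ≥0∞} [Fact (1 ≤ p)]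
    (T : Lp E p μ →L[𝕜] Lp F p μ) {f : Ω → E} (hf : MemLp f p μ) :
    eLpNorm (T (hf.toLp f)) p μ ≤ ‖T‖ₑ * eLpNorm f p μ := by
  rw [← Lp.enorm_def, ← Lp.enorm_toLp hf]
  exact T.le_opENorm _

lemma eLpNorm_indicator_le_of_ae_enorm_bound {E : Type*} [NormedAddCommGroup E] {f : Ω → E}
    {N : ℝ≥0∞} (hfN : ∀ᵐ y ∂μ, ‖f y‖ₑ ≤ N) {s : Set Ω} (hs : MeasurableSet s) (p : ℝ≥0∞) :
    eLpNorm (s.indicator f) p μ ≤ N * μ s ^ p.toReal⁻¹ := by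
  rw [eLpNorm_indicator_eq_eLpNorm_restrict hs, ← Measure.restrict_apply_univ]
  exact eLpNorm_le_of_ae_enorm_bound (ae_restrict_of_ae hfN)

section Kernel

variable {𝕜 : Type*} [RCLike 𝕜]

lemma enorm_integral_mul_sub_integral_mul_le {a b g : Ω → 𝕜} (ha : AEStronglyMeasurable a μ)
    (hb : AEStronglyMeasurable b μ) (hg : AEStronglyMeasurable g μ) {N : ℝ≥0∞}
    (hgN : ∀ᵐ y ∂μ, ‖g y‖ₑ ≤ N) :
    ‖∫ y, a y * g y ∂μ - ∫ y, b y * g y ∂μ‖ₑ ≤ (∫⁻ y, ‖a y - b y‖ₑ ∂μ) * N := by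
  by_cases hfin : (∫⁻ y, ‖a y - b y‖ₑ ∂μ) * N = ∞
  · simp [hfin]
  have hdiff_le : ∫⁻ y, ‖(a y - b y) * g y‖ₑ ∂μ ≤ (∫⁻ y, ‖a y - b y‖ₑ ∂μ) * N :=
    calc ∫⁻ y, ‖(a y - b y) * g y‖ₑ ∂μ ≤ ∫⁻ y, ‖a y - b y‖ₑ * N ∂μ :=
          lintegral_mono_ae <| hgN.mono fun y hy => by rw [enorm_mul]; gcongr
      _ = (∫⁻ y, ‖a y - b y‖ₑ ∂μ) * N := lintegral_mul_const'' _ (ha.sub hb).enorm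
  have hdiff : Integrable (fun y => (a y - b y) * g y) μ :=
    ⟨(ha.sub hb).mul hg, hdiff_le.trans_lt (lt_top_iff_ne_top.2 hfin)⟩
  by_cases hag : Integrable (fun y => a y * g y) μ
  · have hbg : Integrable (fun y => b y * g y) μ :=
      (hag.sub hdiff).congr (.of_forall fun y => by simp only [Pi.sub_apply]; ring)
    rw [← integral_sub hag hbg]
    simp_rw [← sub_mul]
    exact (enorm_integral_le_lintegral_enorm _).trans hdiff_le
  · have hbg : ¬Integrable (fun y => b y * g y) μ := fun hbg =>
      hag ((hbg.add hdiff).congr (.of_forall fun y => by simp only [Pi.add_apply]; ring))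
    simp [integral_undef hag, integral_undef hbg]

lemma eLpNorm_setIntegral_kernel_sub_le {k : Ω → Ω → 𝕜} (hk : Measurable (Function.uncurry k))
    {g : Ω → 𝕜} (hg : AEStronglyMeasurable g μ) {N : ℝ≥0∞} (hgN : ∀ᵐ y ∂μ, ‖g y‖ₑ ≤ N)
    {Q S : Set Ω} (hQ : MeasurableSet Q) {z₀ : Ω} {C : ℝ≥0∞}
    (hkC : ∀ z ∈ Q, ∫⁻ y in S, ‖k z y - k z₀ y‖ₑ ∂μ ≤ C) (p : ℝ≥0∞) :
    eLpNorm (fun z => ∫ y in S, k z y * g y ∂μ - ∫ y in S, k z₀ y * g y ∂μ) p (μ.restrict Q)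
      ≤ C * N * μ Q ^ p.toReal⁻¹ := by
  have hk_meas (z : Ω) : AEStronglyMeasurable (k z) (μ.restrict S) :=
    (hk.comp measurable_prodMk_left).aestronglyMeasurable
  rw [← Measure.restrict_apply_univ]
  refine eLpNorm_le_of_ae_enorm_bound ((ae_restrict_mem hQ).mono fun z hz => ?_)
  exact (enorm_integral_mul_sub_integral_mul_le (hk_meas z) (hk_meas z₀) hg.restrict
    (ae_restrict_of_ae hgN)).trans (by gcongr; exact hkC z hz)

end Kernel

end MeasureTheory

theorem statement12_general {Ω : Type*} [MeasurableSpace Ω] (μ : Measure Ω)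
    (T : Lp ℂ 2 μ →L[ℂ] Lp ℂ 2 μ) (k : Ω → Ω → ℂ)
    (hk : Measurable (Function.uncurry k)) (Q Qhat : Set Ω)
    (hQmeas : MeasurableSet Q) (hQhatmeas : MeasurableSet Qhat)
    (c₀ : ℝ) (hQpos : 0 < μ Q)
    (hdoubling : μ Qhat ≤ ENNReal.ofReal c₀ * μ Q) (hQfin : μ Q < ∞)
    (H : ℝ) (hH : 0 ≤ H)
    (hrep : ∀ (f : Ω → ℂ) (hf2 : MemLp f 2 μ), MemLp f ∞ μ →
      (∀ᵐ x ∂μ.restrict Qhat, f x = 0) →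
      (T (hf2.toLp f) : Ω → ℂ) =ᵐ[μ.restrict Q] fun z => ∫ y, k z y * f y ∂μ)
    (hHor : ∀ z₁ ∈ Q, ∀ z₂ ∈ Q,
      ∫⁻ x in Qhatᶜ, (‖k z₁ x - k z₂ x‖₊ : ℝ≥0∞) ∂μ ≤ ENNReal.ofReal H) :
    ∀ (f : Ω → ℂ) (hf2 : MemLp f 2 μ), MemLp f ∞ μ →
      (⨅ c : ℂ, (μ Q)⁻¹ * ∫⁻ x in Q, (‖(T (hf2.toLp f) : Ω → ℂ) x - c‖₊ : ℝ≥0∞) ^ 2 ∂μ)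
        ≤ ENNReal.ofReal ((‖T‖ * Real.sqrt c₀ + H) ^ 2) * eLpNorm f ∞ μ ^ 2 := by
  intro f hf2 hfinf
  obtain ⟨z₀, hz₀⟩ := nonempty_of_measure_ne_zero hQpos.ne'
  set N := eLpNorm f ∞ μ
  have hfN : ∀ᵐ y ∂μ, ‖f y‖ₑ ≤ N := by
    simpa only [N, eLpNorm_exponent_top] using ae_le_eLpNormEssSup
  have hnear := hf2.indicator hQhatmeas
  have hfar := hf2.indicator hQhatmeas.compl
  set c : ℂ := ∫ y in Qhatᶜ, k z₀ y * f y ∂μ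
  have hsplit : (fun z => (T (hf2.toLp f) : Ω → ℂ) z - c) =ᵐ[μ.restrict Q]
      (T (hnear.toLp _) : Ω → ℂ) + fun z => (T (hfar.toLp _) : Ω → ℂ) z - c := by
    have hf : hf2.toLp f = hnear.toLp _ + hfar.toLp _ := by
      rw [← MemLp.toLp_add]
      exact MemLp.toLp_congr _ _ (Set.indicator_self_add_compl Qhat f).symm.eventuallyEq
    filter_upwards [ae_restrict_of_ae (Lp.coeFn_add (T (hnear.toLp _)) (T (hfar.toLp _)))]
      with z hz
    simp only [hf, map_add, hz, Pi.add_apply]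
    ring
  have hfar_rep : (fun z => (T (hfar.toLp _) : Ω → ℂ) z - c) =ᵐ[μ.restrict Q]
      fun z => ∫ y in Qhatᶜ, k z y * f y ∂μ - c := by
    filter_upwards [hrep _ hfar (hfinf.indicator hQhatmeas.compl)
      ((ae_restrict_mem hQhatmeas).mono fun x hx => Set.indicator_of_notMem (not_not_intro hx) f)] with z hz
    rw [hz, ← integral_indicator hQhatmeas.compl]
    simp_rw [Set.indicator_mul_right]
  refine (iInf_le _ c).trans ?_
  simp only [← enorm_eq_nnnorm]
  rw [lintegral_enorm_sq_eq_eLpNorm_sq, ofReal_pow (by positivity), ← mul_pow]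
  refine ENNReal.inv_mul_sq_le_sq_of_le_mul_rpow_inv_two hQpos.ne' hQfin.ne ?_
  calc eLpNorm (fun z => (T (hf2.toLp f) : Ω → ℂ) z - c) 2 (μ.restrict Q)
      ≤ eLpNorm (T (hnear.toLp _)) 2 (μ.restrict Q)
        + eLpNorm (fun z => (T (hfar.toLp _) : Ω → ℂ) z - c) 2 (μ.restrict Q) :=
        (eLpNorm_congr_ae hsplit).trans_le <| eLpNorm_add_le (Lp.aestronglyMeasurable _).restrict
          ((Lp.aestronglyMeasurable _).restrict.sub aestronglyMeasurable_const) one_le_two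
    _ ≤ ‖T‖ₑ * (N * μ Qhat ^ (2⁻¹ : ℝ)) + ENNReal.ofReal H * N * μ Q ^ (2⁻¹ : ℝ) := by
      gcongr
      · refine (eLpNorm_mono_measure _ Measure.restrict_le_self).trans ?_
        exact (eLpNorm_apply_toLp_le T hnear).trans
          (by gcongr; simpa using eLpNorm_indicator_le_of_ae_enorm_bound hfN hQhatmeas 2)
      · rw [eLpNorm_congr_ae hfar_rep]
        simpa using eLpNorm_setIntegral_kernel_sub_le hk hf2.1 hfN hQmeas
          (fun z hz => hHor z hz z₀ hz₀) 2
    _ ≤ ‖T‖ₑ * (N * (ENNReal.ofReal c₀ * μ Q) ^ (2⁻¹ : ℝ))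
          + ENNReal.ofReal H * N * μ Q ^ (2⁻¹ : ℝ) := by gcongr
    _ = ENNReal.ofReal (‖T‖ * √c₀ + H) * N * μ Q ^ (2⁻¹ : ℝ) := by
      rw [mul_rpow_of_nonneg _ _ (by norm_num), ofReal_rpow_inv_two,
        ofReal_add (by positivity) hH, ofReal_mul (norm_nonneg _), ofReal_norm]
      ring

/-- `L_∞ →` bmo for atomic Calderón–Zygmund operators.  Let `T` be
`L₂(μ)`-bounded with a kernel `k` satisfying the atomic Hörmander condition with constant
`H` relative to a pair of sets `Q ⊆ Q̂` with `μ(Q̂) ≤ c₀·μ(Q) < ∞`.  Then for every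
`f ∈ L₂ ∩ L_∞`, `inf_c (1/μ(Q)) ∫_Q |Tf - c|² dμ ≤ (‖T‖√c₀ + H)² ‖f‖_∞²`. -/
theorem statement12 {Ω : Type*} [MeasurableSpace Ω] (μ : Measure Ω)
    (T : Lp ℂ 2 μ →L[ℂ] Lp ℂ 2 μ) (k : Ω → Ω → ℂ)
    (hk : Measurable (Function.uncurry k)) (Q Qhat : Set Ω)
    (hQmeas : MeasurableSet Q) (hQhatmeas : MeasurableSet Qhat) (hQQ : Q ⊆ Qhat)
    (c₀ : ℝ) (hc₀ : 1 ≤ c₀) (hQpos : 0 < μ Q)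
    (hdoubling : μ Qhat ≤ ENNReal.ofReal c₀ * μ Q) (hQfin : μ Q < ∞)
    (H : ℝ) (hH : 0 ≤ H)
    (hrep : ∀ (f : Ω → ℂ) (hf2 : MemLp f 2 μ), MemLp f ∞ μ →
      (∀ᵐ x ∂μ.restrict Qhat, f x = 0) →
      (T (hf2.toLp f) : Ω → ℂ) =ᵐ[μ.restrict Q] fun z => ∫ y, k z y * f y ∂μ)
    (hHor : ∀ z₁ ∈ Q, ∀ z₂ ∈ Q,
      ∫⁻ x in Qhatᶜ, (‖k z₁ x - k z₂ x‖₊ : ℝ≥0∞) ∂μ ≤ ENNReal.ofReal H) :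
    ∀ (f : Ω → ℂ) (hf2 : MemLp f 2 μ), MemLp f ∞ μ →
      (⨅ c : ℂ, (μ Q)⁻¹ * ∫⁻ x in Q, (‖(T (hf2.toLp f) : Ω → ℂ) x - c‖₊ : ℝ≥0∞) ^ 2 ∂μ)
        ≤ ENNReal.ofReal ((‖T‖ * Real.sqrt c₀ + H) ^ 2) * eLpNorm f ∞ μ ^ 2 :=
  statement12_general μ T k hk Q Qhat hQmeas hQhatmeas c₀ hQpos hdoubling hQfin H hH hrep hHor
end
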